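/- arXiv:1804.08808 — 3 statements merged into one kernel-verified Lean document; each statement's English description precedes it below -/
import Mathlib

section
/- Let G be an (r,s)-directed hypergraph. If r/p + s/q ≥ 1, then λ_{p,q}(G) ≤ (1/(r^{r/p} s^{s/q})) · max_{e∈E(G)} { ∏_{u∈T(e)} (d_u⁺)^{1/p} ∏_{v∈H(e)} (d_v⁻)^{1/q} }. If r/p + s/q < 1, then λ_{p,q}(G) ≤ (|E(G)|^{1−(r/p+s/q)}/(r^{r/p} s^{s/q})) · max_{e∈E(G)} { ∏_{u∈T(e)} (d_u⁺)^{1/p} ∏_{v∈H(e)} (d_v⁻)^{1/q} }. -/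
/-!
Weight each incidence of a vertex `u` with an edge by `1 / d⁺_u` (tails) or `1 / d⁻_v` (heads).
For unit vectors `x, y` the weighted masses `A e = ∑_{u ∈ T(e)} |x_u|^p / d⁺_u` and
`B e = ∑_{v ∈ H(e)} |y_v|^q / d⁻_v` then sum to at most one over the edges, and AM-GM on each
edge bounds its term of the form by the degree product of `e` times
`(A e / r)^{r/p} (B e / s)^{s/q}`. A second weighted AM-GM merges `A e` and `B e` into one
sub-probability vector `C` raised to the power `t = r/p + s/q`, and `∑_e C_e^t` is at most `1`
when `t ≥ 1` and, by concavity of `x ↦ x^t`, at most `|E|^{1-t}` when `t < 1`.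
-/

structure DirectedHypergraph (m n N r s : ℕ) where
  tail : Fin N → Finset (Fin m)
  head : Fin N → Finset (Fin n)
  tail_card : ∀ e, (tail e).card = r
  head_card : ∀ e, (head e).card = s

namespace DirectedHypergraph

noncomputable def pnorm {k : ℕ} (p : ℝ) (x : Fin k → ℝ) : ℝ :=
  (∑ i, |x i| ^ p) ^ (1 / p)

variable {m n N r s : ℕ}

noncomputable def polyForm (G : DirectedHypergraph m n N r s)
    (x : Fin m → ℝ) (y : Fin n → ℝ) : ℝ :=
  ∑ e, (∏ u ∈ G.tail e, x u) * ∏ v ∈ G.head e, y v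

noncomputable def specRad (G : DirectedHypergraph m n N r s) (p q : ℝ) : ℝ :=
  sSup {z | ∃ x y, pnorm p x = 1 ∧ pnorm q y = 1 ∧ z = G.polyForm x y}

def outDeg (G : DirectedHypergraph m n N r s) (u : Fin m) : ℕ :=
  (Finset.univ.filter fun e => u ∈ G.tail e).card

def inDeg (G : DirectedHypergraph m n N r s) (v : Fin n) : ℕ :=
  (Finset.univ.filter fun e => v ∈ G.head e).card

end DirectedHypergraph

open Finset

namespace Real

theorem rpow_mul_rpow_le_weighted_mean_rpow {a b α β : ℝ} (ha : 0 ≤ a) (hb : 0 ≤ b)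
    (hα : 0 ≤ α) (hβ : 0 ≤ β) :
    a ^ α * b ^ β ≤ ((α * a + β * b) / (α + β)) ^ (α + β) := by
  rcases (add_nonneg hα hβ).eq_or_lt with ht | ht
  · obtain ⟨rfl, rfl⟩ : α = 0 ∧ β = 0 := ⟨by linarith, by linarith⟩
    simp
  have hgm : a ^ (α / (α + β)) * b ^ (β / (α + β)) ≤ (α * a + β * b) / (α + β) := by
    refine (geom_mean_le_arith_mean2_weighted (by positivity) (by positivity) ha hb
      (by field_simp)).trans_eq ?_
    field_simp
  calc a ^ α * b ^ β = (a ^ (α / (α + β)) * b ^ (β / (α + β))) ^ (α + β) := by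
        rw [mul_rpow (by positivity) (by positivity), ← rpow_mul ha, ← rpow_mul hb,
          div_mul_cancel₀ _ ht.ne', div_mul_cancel₀ _ ht.ne']
    _ ≤ _ := rpow_le_rpow (by positivity) hgm ht.le

theorem sum_rpow_le_one_of_one_le {ι : Type*} {s : Finset ι} {f : ι → ℝ} {t : ℝ}
    (hf : ∀ i ∈ s, 0 ≤ f i) (hsum : ∑ i ∈ s, f i ≤ 1) (ht : 1 ≤ t) :
    ∑ i ∈ s, f i ^ t ≤ 1 := by
  refine le_trans (sum_le_sum fun i hi => ?_) hsum
  have hfi : f i ≤ 1 := (single_le_sum hf hi).trans hsum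
  simpa using rpow_le_rpow_of_exponent_ge' (hf i hi) hfi zero_le_one ht

theorem sum_rpow_le_card_rpow {ι : Type*} {s : Finset ι} {f : ι → ℝ} {t : ℝ}
    (hf : ∀ i ∈ s, 0 ≤ f i) (hsum : ∑ i ∈ s, f i ≤ 1) (ht₀ : 0 ≤ t) (ht₁ : t ≤ 1) :
    ∑ i ∈ s, f i ^ t ≤ (#s : ℝ) ^ (1 - t) := by
  rcases s.eq_empty_or_nonempty with rfl | hs
  · simp only [sum_empty, card_empty, Nat.cast_zero]
    positivity
  have hn : (0 : ℝ) < #s := by exact_mod_cast hs.card_pos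
  have hjensen := (concaveOn_rpow ht₀ ht₁).le_map_sum (t := s) (w := fun _ => (#s : ℝ)⁻¹)
    (p := f) (fun _ _ => by positivity) (by simp [hn.ne']) hf
  simp only [smul_eq_mul, ← mul_sum] at hjensen
  calc ∑ i ∈ s, f i ^ t = #s * ((#s : ℝ)⁻¹ * ∑ i ∈ s, f i ^ t) := by field_simp
    _ ≤ #s * ((#s : ℝ)⁻¹ * ∑ i ∈ s, f i) ^ t := by gcongr
    _ ≤ #s * ((#s : ℝ)⁻¹ * 1) ^ t := by
        gcongr
        exact mul_nonneg (by positivity) (sum_nonneg hf)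
    _ = (#s : ℝ) ^ (1 - t) := by
        rw [mul_one, inv_rpow hn.le, rpow_sub hn, rpow_one, div_eq_mul_inv]

theorem prod_rpow_le_mean_rpow {ι : Type*} (s : Finset ι) {z : ι → ℝ} {γ : ℝ}
    (hz : ∀ i ∈ s, 0 ≤ z i) (hγ : 0 ≤ γ) :
    ∏ i ∈ s, z i ^ γ ≤ ((∑ i ∈ s, z i) / #s) ^ (#s * γ) := by
  rcases s.eq_empty_or_nonempty with rfl | hs
  · simp
  have hn : (0 : ℝ) < #s := by exact_mod_cast hs.card_pos
  have hamgm := geom_mean_le_arith_mean s (fun _ => 1) z (by simp) (by simpa using hn) hz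
  simp only [rpow_one, sum_const, nsmul_eq_mul, mul_one, one_mul] at hamgm
  calc ∏ i ∈ s, z i ^ γ = (∏ i ∈ s, z i) ^ γ := finsetProd_rpow s z hz γ
    _ = ((∏ i ∈ s, z i) ^ (#s : ℝ)⁻¹) ^ (#s * γ) := by
        rw [← rpow_mul (prod_nonneg hz), inv_mul_cancel_left₀ hn.ne']
    _ ≤ _ := rpow_le_rpow (rpow_nonneg (prod_nonneg hz) _) hamgm (by positivity)

end Real

section FamilyDegree

variable {ι κ : Type*} [Fintype ι] [DecidableEq κ] (T : ι → Finset κ)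

def familyDegree (u : κ) : ℕ := #{e | u ∈ T e}

theorem sum_sum_div_familyDegree_le [Fintype κ] {a : κ → ℝ} (ha : ∀ u, 0 ≤ a u) :
    ∑ e, ∑ u ∈ T e, a u / familyDegree T u ≤ ∑ u, a u := by
  rw [sum_comm' (t' := univ) (s' := fun u => {e | u ∈ T e}) (by simp)]
  refine sum_le_sum fun u _ => ?_
  rw [sum_const, nsmul_eq_mul]
  change (familyDegree T u : ℝ) * (a u / familyDegree T u) ≤ a u
  rcases eq_or_ne (familyDegree T u : ℝ) 0 with h | h
  · simpa [h] using ha u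
  · rw [mul_div_cancel₀ _ h]

theorem prod_abs_le_prod_familyDegree_rpow_mul {p : ℝ} (hp : 0 < p) (x : κ → ℝ) (e : ι) :
    ∏ u ∈ T e, |x u| ≤ (∏ u ∈ T e, (familyDegree T u : ℝ) ^ (1 / p)) *
      ((∑ u ∈ T e, |x u| ^ p / familyDegree T u) / #(T e)) ^ ((#(T e) : ℝ) / p) := by
  have hdeg : ∀ u ∈ T e, (0 : ℝ) < familyDegree T u := fun u hu => by
    exact_mod_cast card_pos.mpr ⟨e, by simpa using hu⟩
  have hsplit : ∀ u ∈ T e,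
      |x u| = (familyDegree T u : ℝ) ^ (1 / p) * (|x u| ^ p / familyDegree T u) ^ (1 / p) := by
    intro u hu
    rw [← Real.mul_rpow (hdeg u hu).le (by positivity), mul_div_cancel₀ _ (hdeg u hu).ne',
      ← Real.rpow_mul (abs_nonneg _), mul_one_div_cancel hp.ne', Real.rpow_one]
  rw [prod_congr rfl hsplit, prod_mul_distrib]
  refine mul_le_mul_of_nonneg_left ?_ (prod_nonneg fun u _ => by positivity)
  simpa only [mul_one_div] using Real.prod_rpow_le_mean_rpow (T e)
    (z := fun u => |x u| ^ p / familyDegree T u) (fun u _ => by positivity)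
    (one_div_nonneg.mpr hp.le)

theorem exists_sum_le_one_prod_abs_le [Fintype κ] {p : ℝ} (hp : 0 < p) {x : κ → ℝ}
    (hx : ∑ u, |x u| ^ p ≤ 1) :
    ∃ A : ι → ℝ, (∀ e, 0 ≤ A e) ∧ ∑ e, A e ≤ 1 ∧ ∀ e, ∏ u ∈ T e, |x u| ≤
      (∏ u ∈ T e, (familyDegree T u : ℝ) ^ (1 / p)) * (A e / #(T e)) ^ ((#(T e) : ℝ) / p) :=
  ⟨fun e => ∑ u ∈ T e, |x u| ^ p / familyDegree T u, fun e => by positivity,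
    (sum_sum_div_familyDegree_le T fun u => by positivity).trans hx,
    prod_abs_le_prod_familyDegree_rpow_mul T hp x⟩

end FamilyDegree

namespace DirectedHypergraph

variable {m n N r s : ℕ} (G : DirectedHypergraph m n N r s)

noncomputable def degreeProduct (p q : ℝ) (e : Fin N) : ℝ :=
  (∏ u ∈ G.tail e, (G.outDeg u : ℝ) ^ (1 / p)) * ∏ v ∈ G.head e, (G.inDeg v : ℝ) ^ (1 / q)

theorem degreeProduct_nonneg (p q : ℝ) (e : Fin N) : 0 ≤ G.degreeProduct p q e := by
  unfold degreeProduct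
  positivity

theorem sum_abs_rpow_eq_one_of_pnorm_eq_one {k : ℕ} {p : ℝ} (hp : p ≠ 0) {x : Fin k → ℝ}
    (hx : pnorm p x = 1) : ∑ i, |x i| ^ p = 1 := by
  have h := congrArg (· ^ p) hx
  unfold pnorm at h
  rwa [one_div, Real.rpow_inv_rpow (by positivity) hp, Real.one_rpow] at h

theorem exists_polyForm_le_mul_sum_rpow {p q : ℝ} (hp : 0 < p) (hq : 0 < q)
    {x : Fin m → ℝ} {y : Fin n → ℝ} (hx : pnorm p x = 1) (hy : pnorm q y = 1) {M : ℝ}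
    (hM : ∀ e, G.degreeProduct p q e ≤ M) :
    ∃ C : Fin N → ℝ, (∀ e, 0 ≤ C e) ∧ ∑ e, C e ≤ 1 ∧
      G.polyForm x y ≤ M / ((r : ℝ) ^ ((r : ℝ) / p) * (s : ℝ) ^ ((s : ℝ) / q)) *
        ∑ e, C e ^ ((r : ℝ) / p + (s : ℝ) / q) := by
  obtain ⟨A, hA₀, hA₁, hxA⟩ := exists_sum_le_one_prod_abs_le G.tail hp
    (sum_abs_rpow_eq_one_of_pnorm_eq_one hp.ne' hx).le
  obtain ⟨B, hB₀, hB₁, hyB⟩ := exists_sum_le_one_prod_abs_le G.head hq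
    (sum_abs_rpow_eq_one_of_pnorm_eq_one hq.ne' hy).le
  set α := (r : ℝ) / p
  set β := (s : ℝ) / q
  have hα : 0 ≤ α := by positivity
  have hβ : 0 ≤ β := by positivity
  refine ⟨fun e => (α * A e + β * B e) / (α + β),
    fun e => div_nonneg (add_nonneg (mul_nonneg hα (hA₀ e)) (mul_nonneg hβ (hB₀ e)))
      (add_nonneg hα hβ), ?_, ?_⟩
  · rw [← sum_div, sum_add_distrib, ← mul_sum, ← mul_sum]
    exact div_le_one_of_le₀
      (add_le_add (mul_le_of_le_one_right hα hA₁) (mul_le_of_le_one_right hβ hB₁)) (by positivity)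
  rw [polyForm, mul_sum]
  refine sum_le_sum fun e _ => ?_
  have hxe := hxA e
  have hye := hyB e
  rw [G.tail_card] at hxe
  rw [G.head_card] at hye
  calc (∏ u ∈ G.tail e, x u) * ∏ v ∈ G.head e, y v
      ≤ (∏ u ∈ G.tail e, |x u|) * ∏ v ∈ G.head e, |y v| := by
        rw [← abs_prod, ← abs_prod, ← abs_mul]
        exact le_abs_self _
    _ ≤ ((∏ u ∈ G.tail e, (G.outDeg u : ℝ) ^ (1 / p)) * (A e / r) ^ α) *
          ((∏ v ∈ G.head e, (G.inDeg v : ℝ) ^ (1 / q)) * (B e / s) ^ β) := by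
        have := hA₀ e
        gcongr
        · exact hxe
        · exact hye
    _ = G.degreeProduct p q e * (A e ^ α * B e ^ β) / ((r : ℝ) ^ α * (s : ℝ) ^ β) := by
        rw [degreeProduct, Real.div_rpow (hA₀ e) (by positivity),
          Real.div_rpow (hB₀ e) (by positivity)]
        ring
    _ ≤ M * ((α * A e + β * B e) / (α + β)) ^ (α + β) / ((r : ℝ) ^ α * (s : ℝ) ^ β) := by
        have := hA₀ e
        have := hB₀ e
        gcongr
        · exact (G.degreeProduct_nonneg p q e).trans (hM e)
        · exact hM e
        · exact Real.rpow_mul_rpow_le_weighted_mean_rpow (hA₀ e) (hB₀ e) hα hβ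
    _ = _ := by ring

theorem specRad_le_of_sum_rpow_le {p q : ℝ} (hp : 0 < p) (hq : 0 < q) {M K : ℝ}
    (hM : ∀ e, G.degreeProduct p q e ≤ M) (hM₀ : 0 ≤ M)
    (hK : ∀ C : Fin N → ℝ, (∀ e, 0 ≤ C e) → ∑ e, C e ≤ 1 →
      ∑ e, C e ^ ((r : ℝ) / p + (s : ℝ) / q) ≤ K) :
    G.specRad p q ≤ K / ((r : ℝ) ^ ((r : ℝ) / p) * (s : ℝ) ^ ((s : ℝ) / q)) * M := by
  have hK₀ : 0 ≤ K :=
    (sum_nonneg fun e _ => Real.rpow_nonneg le_rfl _).trans (hK 0 (fun _ => le_rfl) (by simp))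
  refine Real.sSup_le ?_ (by positivity)
  rintro _ ⟨x, y, hx, hy, rfl⟩
  obtain ⟨C, hC₀, hC₁, hxy⟩ := G.exists_polyForm_le_mul_sum_rpow hp hq hx hy hM
  calc G.polyForm x y
      ≤ M / ((r : ℝ) ^ ((r : ℝ) / p) * (s : ℝ) ^ ((s : ℝ) / q)) *
          ∑ e, C e ^ ((r : ℝ) / p + (s : ℝ) / q) := hxy
    _ ≤ M / ((r : ℝ) ^ ((r : ℝ) / p) * (s : ℝ) ^ ((s : ℝ) / q)) * K := by
        gcongr
        exact hK C hC₀ hC₁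
    _ = _ := by ring

end DirectedHypergraph

theorem specRad_upper_degree_products_general (m n N r s : ℕ)
    (hN : 0 < N) (G : DirectedHypergraph m n N r s)
    (p q : ℝ) (hp : 1 ≤ p) (hq : 1 ≤ q) :
    (1 ≤ (r : ℝ) / p + (s : ℝ) / q →
      G.specRad p q ≤ 1 / ((r : ℝ) ^ ((r : ℝ) / p) * (s : ℝ) ^ ((s : ℝ) / q)) *
        Finset.univ.sup' ⟨(⟨0, hN⟩ : Fin N), Finset.mem_univ _⟩
          (fun e => (∏ u ∈ G.tail e, (G.outDeg u : ℝ) ^ (1 / p)) *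
            ∏ v ∈ G.head e, (G.inDeg v : ℝ) ^ (1 / q))) ∧
    ((r : ℝ) / p + (s : ℝ) / q < 1 →
      G.specRad p q ≤ (N : ℝ) ^ (1 - ((r : ℝ) / p + (s : ℝ) / q)) /
          ((r : ℝ) ^ ((r : ℝ) / p) * (s : ℝ) ^ ((s : ℝ) / q)) *
        Finset.univ.sup' ⟨(⟨0, hN⟩ : Fin N), Finset.mem_univ _⟩
          (fun e => (∏ u ∈ G.tail e, (G.outDeg u : ℝ) ^ (1 / p)) *
            ∏ v ∈ G.head e, (G.inDeg v : ℝ) ^ (1 / q))) := by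
  have hp₀ : 0 < p := by linarith
  have hq₀ : 0 < q := by linarith
  have hM : ∀ e, G.degreeProduct p q e ≤
      univ.sup' ⟨(⟨0, hN⟩ : Fin N), mem_univ _⟩ (G.degreeProduct p q) :=
    fun e => le_sup' _ (mem_univ e)
  have hM₀ := (G.degreeProduct_nonneg p q ⟨0, hN⟩).trans (hM ⟨0, hN⟩)
  constructor
  · intro ht
    exact G.specRad_le_of_sum_rpow_le hp₀ hq₀ hM hM₀ fun C hC₀ hC₁ =>
      Real.sum_rpow_le_one_of_one_le (fun e _ => hC₀ e) hC₁ ht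
  · intro ht
    refine G.specRad_le_of_sum_rpow_le hp₀ hq₀ hM hM₀ fun C hC₀ hC₁ => ?_
    simpa using Real.sum_rpow_le_card_rpow (fun e _ => hC₀ e) hC₁ (by positivity) ht.le

/-- Degree-product upper bounds: with
`M = max_{e∈E(G)} ∏_{u∈T(e)} (d_u⁺)^{1/p} ∏_{v∈H(e)} (d_v⁻)^{1/q}`, if
`r/p + s/q ≥ 1` then `λ_{p,q}(G) ≤ M/(r^{r/p} s^{s/q})`, and if `r/p + s/q < 1`
then `λ_{p,q}(G) ≤ |E(G)|^{1−(r/p+s/q)} M/(r^{r/p} s^{s/q})`. -/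
theorem specRad_upper_degree_products (m n N r s : ℕ) (hr : 0 < r) (hs : 0 < s)
    (hN : 0 < N) (G : DirectedHypergraph m n N r s)
    (p q : ℝ) (hp : 1 ≤ p) (hq : 1 ≤ q) :
    (1 ≤ (r : ℝ) / p + (s : ℝ) / q →
      G.specRad p q ≤ 1 / ((r : ℝ) ^ ((r : ℝ) / p) * (s : ℝ) ^ ((s : ℝ) / q)) *
        Finset.univ.sup' ⟨(⟨0, hN⟩ : Fin N), Finset.mem_univ _⟩
          (fun e => (∏ u ∈ G.tail e, (G.outDeg u : ℝ) ^ (1 / p)) *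
            ∏ v ∈ G.head e, (G.inDeg v : ℝ) ^ (1 / q))) ∧
    ((r : ℝ) / p + (s : ℝ) / q < 1 →
      G.specRad p q ≤ (N : ℝ) ^ (1 - ((r : ℝ) / p + (s : ℝ) / q)) /
          ((r : ℝ) ^ ((r : ℝ) / p) * (s : ℝ) ^ ((s : ℝ) / q)) *
        Finset.univ.sup' ⟨(⟨0, hN⟩ : Fin N), Finset.mem_univ _⟩
          (fun e => (∏ u ∈ G.tail e, (G.outDeg u : ℝ) ^ (1 / p)) *
            ∏ v ∈ G.head e, (G.inDeg v : ℝ) ^ (1 / q))) :=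
  specRad_upper_degree_products_general m n N r s hN G p q hp hq
end

section
/- Let G be an (r,s)-directed hypergraph with r/p + s/q < 1 admitting an elliptic consistently α-normal labeling with arc weights {w(e)}. Then for every arc e, [α (δ⁺)^{r/p}(δ⁻)^{s/q}]^{1/(1−(r/p+s/q))} ≤ w(e) ≤ [α (Δ⁺)^{r/p}(Δ⁻)^{s/q}]^{1/(1−(r/p+s/q))}. -/
/-!
Consistency forces `B(u,e) = w(e) / S(u)`, where `S(u)` (resp. `S'(v)`) is the total weight
of the arcs whose tail contains `u` (resp. whose head contains `v`). Substituting this into the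
normality equation turns it into the fixed-point relation
`w(e) = α ∏_{u ∈ T(e)} S(u)^{1/p} ∏_{v ∈ H(e)} S'(v)^{1/q}`.
At an arc of minimal weight `w₀` every `S(u)` is at least `δ⁺ w₀`, so
`w₀ ≥ α (δ⁺)^{r/p} (δ⁻)^{s/q} w₀^{r/p + s/q}`; as `r/p + s/q < 1` this solves to the lower
bound on `w₀`, hence on every weight. An arc of maximal weight gives the upper bound.
-/

open Finset

section RpowBounds

lemma rpow_one_div_one_sub_le_of_mul_rpow_le {x c β : ℝ} (hx : 0 < x) (hc : 0 ≤ c) (hβ : β < 1)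
    (h : c * x ^ β ≤ x) : c ^ (1 / (1 - β)) ≤ x := by
  rw [one_div, Real.rpow_inv_le_iff_of_pos hc hx.le (by linarith)]
  have hxβ : 0 < x ^ β := Real.rpow_pos_of_pos hx β
  rw [← mul_le_mul_iff_of_pos_right hxβ, ← Real.rpow_add hx, sub_add_cancel, Real.rpow_one]
  exact h

lemma le_rpow_one_div_one_sub_of_le_mul_rpow {x c β : ℝ} (hx : 0 < x) (hc : 0 ≤ c) (hβ : β < 1)
    (h : x ≤ c * x ^ β) : x ≤ c ^ (1 / (1 - β)) := by
  rw [one_div, Real.le_rpow_inv_iff_of_pos hx.le hc (by linarith)]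
  have hxβ : 0 < x ^ β := Real.rpow_pos_of_pos hx β
  rw [← mul_le_mul_iff_of_pos_right hxβ, ← Real.rpow_add hx, sub_add_cancel, Real.rpow_one]
  exact h

lemma mul_mul_rpow_mul_mul_rpow {α a b x t₁ t₂ : ℝ} (ha : 0 ≤ a) (hb : 0 ≤ b) (hx : 0 < x) :
    α * ((a * x) ^ t₁ * (b * x) ^ t₂) = α * a ^ t₁ * b ^ t₂ * x ^ (t₁ + t₂) := by
  rw [Real.mul_rpow ha hx.le, Real.mul_rpow hb hx.le, Real.rpow_add hx]
  ring

variable {ι : Type*} {s : Finset ι}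

lemma prod_const_rpow {a : ℝ} (ha : 0 ≤ a) (t : ℝ) :
    ∏ _x ∈ s, a ^ t = a ^ (s.card * t) := by
  rw [prod_const, Real.rpow_natCast_mul ha, Real.rpow_pow_comm ha]

lemma rpow_card_mul_le_prod_rpow {f : ι → ℝ} {a t : ℝ} (ha : 0 ≤ a) (ht : 0 ≤ t)
    (h : ∀ x ∈ s, a ≤ f x) : a ^ (s.card * t) ≤ ∏ x ∈ s, f x ^ t := by
  rw [← prod_const_rpow ha]
  exact prod_le_prod (fun _ _ => Real.rpow_nonneg ha t)
    fun x hx => Real.rpow_le_rpow ha (h x hx) ht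

lemma prod_rpow_le_rpow_card_mul {f : ι → ℝ} {a t : ℝ} (ha : 0 ≤ a) (ht : 0 ≤ t)
    (hf : ∀ x ∈ s, 0 ≤ f x) (h : ∀ x ∈ s, f x ≤ a) : ∏ x ∈ s, f x ^ t ≤ a ^ (s.card * t) := by
  rw [← prod_const_rpow ha]
  exact prod_le_prod (fun x hx => Real.rpow_nonneg (hf x hx) t)
    fun x hx => Real.rpow_le_rpow (hf x hx) (h x hx) ht

lemma prod_rpow_mul_prod_rpow_of_forall_eq_mul {a b : ι → ℝ} {c : ℝ} (hc : 0 ≤ c)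
    (ha : ∀ x ∈ s, 0 ≤ a x) (hb : ∀ x ∈ s, 0 ≤ b x) (h : ∀ x ∈ s, c = a x * b x) (t : ℝ) :
    (∏ x ∈ s, a x ^ t) * ∏ x ∈ s, b x ^ t = c ^ (s.card * t) := by
  rw [← prod_mul_distrib, ← prod_const_rpow hc]
  refine prod_congr rfl fun x hx => ?_
  rw [h x hx, Real.mul_rpow (ha x hx) (hb x hx)]

end RpowBounds

section Incidence

variable {ι κ : Type*} [Fintype ι] [DecidableEq κ]

noncomputable def incidenceSum (A : ι → Finset κ) (w : ι → ℝ) (x : κ) : ℝ :=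
  ∑ f ∈ univ.filter (fun f => x ∈ A f), w f

variable {A : ι → Finset κ} {w : ι → ℝ}

lemma incidenceSum_nonneg (hw : ∀ f, 0 ≤ w f) (x : κ) : 0 ≤ incidenceSum A w x :=
  sum_nonneg fun f _ => hw f

lemma card_mul_le_incidenceSum {a : ℝ} (hw : ∀ f, a ≤ w f) (x : κ) :
    (univ.filter fun f => x ∈ A f).card * a ≤ incidenceSum A w x := by
  simpa only [incidenceSum, nsmul_eq_mul] using card_nsmul_le_sum _ w a fun f _ => hw f

lemma incidenceSum_le_card_mul {a : ℝ} (hw : ∀ f, w f ≤ a) (x : κ) :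
    incidenceSum A w x ≤ (univ.filter fun f => x ∈ A f).card * a := by
  simpa only [incidenceSum, nsmul_eq_mul] using sum_le_card_nsmul _ w a fun f _ => hw f

lemma eq_incidenceSum_mul_of_consistent {b : ι → ℝ} {x : κ} {e : ι}
    (hzero : ∀ f, x ∉ A f → b f = 0) (hrow : ∑ f, b f = 1)
    (hcons : ∀ f, x ∈ A f → w e * b f = w f * b e) :
    w e = incidenceSum A w x * b e := by
  calc w e = ∑ f, w e * b f := by rw [← mul_sum, hrow, mul_one]
    _ = ∑ f ∈ univ.filter (fun f => x ∈ A f), w e * b f := by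
        refine (sum_filter_of_ne fun f _ hf => ?_).symm
        by_contra hx
        exact hf (by rw [hzero f hx, mul_zero])
    _ = ∑ f ∈ univ.filter (fun f => x ∈ A f), w f * b e :=
        sum_congr rfl fun f hf => hcons f (mem_filter.1 hf).2
    _ = incidenceSum A w x * b e := by rw [incidenceSum, sum_mul]

end Incidence

namespace DirectedHypergraph

variable {m n N r s : ℕ} (G : DirectedHypergraph m n N r s)

noncomputable def normalMap (p q : ℝ) (w : Fin N → ℝ) (e : Fin N) : ℝ :=
  (∏ u ∈ G.tail e, incidenceSum G.tail w u ^ (1 / p)) *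
    ∏ v ∈ G.head e, incidenceSum G.head w v ^ (1 / q)

variable {G}

lemma eq_mul_normalMap {p q α : ℝ} {w : Fin N → ℝ} {Bt : Fin m → Fin N → ℝ}
    {Bh : Fin n → Fin N → ℝ} {e : Fin N} (hw : ∀ f, 0 < w f)
    (hBt : ∀ u ∈ G.tail e, 0 ≤ Bt u e) (hBh : ∀ v ∈ G.head e, 0 ≤ Bh v e)
    (htail : ∀ u ∈ G.tail e, w e = incidenceSum G.tail w u * Bt u e)
    (hhead : ∀ v ∈ G.head e, w e = incidenceSum G.head w v * Bh v e)
    (hnormal : w e ^ (1 - ((r : ℝ) / p + (s : ℝ) / q)) *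
        ((∏ u ∈ G.tail e, Bt u e ^ (1 / p)) * ∏ v ∈ G.head e, Bh v e ^ (1 / q)) = α) :
    w e = α * G.normalMap p q w e := by
  have hw0 := (hw e).le
  have hT := prod_rpow_mul_prod_rpow_of_forall_eq_mul hw0
    (fun u _ => incidenceSum_nonneg (fun f => (hw f).le) u) hBt htail (1 / p)
  have hH := prod_rpow_mul_prod_rpow_of_forall_eq_mul hw0
    (fun v _ => incidenceSum_nonneg (fun f => (hw f).le) v) hBh hhead (1 / q)
  rw [G.tail_card, mul_one_div] at hT
  rw [G.head_card, mul_one_div] at hH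
  calc w e = w e ^ (1 - ((r : ℝ) / p + (s : ℝ) / q)) *
        (w e ^ ((r : ℝ) / p) * w e ^ ((s : ℝ) / q)) := by
        rw [← Real.rpow_add (hw e), ← Real.rpow_add (hw e), sub_add_cancel, Real.rpow_one]
    _ = α * G.normalMap p q w e := by
        rw [← hT, ← hH, ← hnormal, normalMap]
        ring

lemma rpow_le_normalMap {p q a : ℝ} {δp δn : ℕ} {w : Fin N → ℝ} (hp : 0 < p) (hq : 0 < q)
    (ha : 0 ≤ a) (hw : ∀ f, a ≤ w f)
    (hδp : ∀ u, δp ≤ G.outDeg u) (hδn : ∀ v, δn ≤ G.inDeg v) (e : Fin N) :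
    ((δp : ℝ) * a) ^ ((r : ℝ) / p) * ((δn : ℝ) * a) ^ ((s : ℝ) / q) ≤ G.normalMap p q w e := by
  have hS : ∀ u, (δp : ℝ) * a ≤ incidenceSum G.tail w u := fun u =>
    (mul_le_mul_of_nonneg_right (Nat.cast_le.mpr (hδp u)) ha).trans (card_mul_le_incidenceSum hw u)
  have hT : ∀ v, (δn : ℝ) * a ≤ incidenceSum G.head w v := fun v =>
    (mul_le_mul_of_nonneg_right (Nat.cast_le.mpr (hδn v)) ha).trans (card_mul_le_incidenceSum hw v)
  have hP := rpow_card_mul_le_prod_rpow (s := G.tail e) (by positivity)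
    (one_div_nonneg.mpr hp.le) fun u _ => hS u
  have hQ := rpow_card_mul_le_prod_rpow (s := G.head e) (by positivity)
    (one_div_nonneg.mpr hq.le) fun v _ => hT v
  rw [G.tail_card, mul_one_div] at hP
  rw [G.head_card, mul_one_div] at hQ
  exact mul_le_mul hP hQ (by positivity) ((Real.rpow_nonneg (by positivity) _).trans hP)

lemma normalMap_le_rpow {p q a : ℝ} {Δp Δn : ℕ} {w : Fin N → ℝ} (hp : 0 < p) (hq : 0 < q)
    (hw0 : ∀ f, 0 ≤ w f) (hw : ∀ f, w f ≤ a)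
    (hΔp : ∀ u, G.outDeg u ≤ Δp) (hΔn : ∀ v, G.inDeg v ≤ Δn) (e : Fin N) :
    G.normalMap p q w e ≤ ((Δp : ℝ) * a) ^ ((r : ℝ) / p) * ((Δn : ℝ) * a) ^ ((s : ℝ) / q) := by
  have ha : 0 ≤ a := (hw0 e).trans (hw e)
  have hS : ∀ u, incidenceSum G.tail w u ≤ (Δp : ℝ) * a := fun u =>
    (incidenceSum_le_card_mul hw u).trans (mul_le_mul_of_nonneg_right (Nat.cast_le.mpr (hΔp u)) ha)
  have hT : ∀ v, incidenceSum G.head w v ≤ (Δn : ℝ) * a := fun v =>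
    (incidenceSum_le_card_mul hw v).trans (mul_le_mul_of_nonneg_right (Nat.cast_le.mpr (hΔn v)) ha)
  have hP := prod_rpow_le_rpow_card_mul (s := G.tail e) (by positivity)
    (one_div_nonneg.mpr hp.le) (fun u _ => incidenceSum_nonneg hw0 u) fun u _ => hS u
  have hQ := prod_rpow_le_rpow_card_mul (s := G.head e) (by positivity)
    (one_div_nonneg.mpr hq.le) (fun v _ => incidenceSum_nonneg hw0 v) fun v _ => hT v
  rw [G.tail_card, mul_one_div] at hP
  rw [G.head_card, mul_one_div] at hQ
  exact mul_le_mul hP hQ (prod_nonneg fun v _ => Real.rpow_nonneg (incidenceSum_nonneg hw0 v) _)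
    (by positivity)

lemma le_weight_of_eq_mul_normalMap {p q α : ℝ} {δp δn : ℕ} {w : Fin N → ℝ}
    (hp : 0 < p) (hq : 0 < q) (hell : (r : ℝ) / p + (s : ℝ) / q < 1) (hα : 0 ≤ α)
    (hw : ∀ f, 0 < w f) (hfix : ∀ f, w f = α * G.normalMap p q w f)
    (hδp : ∀ u, δp ≤ G.outDeg u) (hδn : ∀ v, δn ≤ G.inDeg v) (e : Fin N) :
    (α * (δp : ℝ) ^ ((r : ℝ) / p) * (δn : ℝ) ^ ((s : ℝ) / q)) ^
      (1 / (1 - ((r : ℝ) / p + (s : ℝ) / q))) ≤ w e := by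
  obtain ⟨e₀, -, hmin⟩ := exists_min_image univ w ⟨e, mem_univ e⟩
  have hmin' : ∀ f, w e₀ ≤ w f := fun f => hmin f (mem_univ f)
  refine (rpow_one_div_one_sub_le_of_mul_rpow_le (hw e₀) (by positivity) hell ?_).trans (hmin' e)
  calc _ = α * (((δp : ℝ) * w e₀) ^ ((r : ℝ) / p) * ((δn : ℝ) * w e₀) ^ ((s : ℝ) / q)) :=
        (mul_mul_rpow_mul_mul_rpow (Nat.cast_nonneg _) (Nat.cast_nonneg _) (hw e₀)).symm
    _ ≤ α * G.normalMap p q w e₀ :=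
        mul_le_mul_of_nonneg_left (rpow_le_normalMap hp hq (hw e₀).le hmin' hδp hδn e₀) hα
    _ = w e₀ := (hfix e₀).symm

lemma weight_le_of_eq_mul_normalMap {p q α : ℝ} {Δp Δn : ℕ} {w : Fin N → ℝ}
    (hp : 0 < p) (hq : 0 < q) (hell : (r : ℝ) / p + (s : ℝ) / q < 1) (hα : 0 ≤ α)
    (hw : ∀ f, 0 < w f) (hfix : ∀ f, w f = α * G.normalMap p q w f)
    (hΔp : ∀ u, G.outDeg u ≤ Δp) (hΔn : ∀ v, G.inDeg v ≤ Δn) (e : Fin N) :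
    w e ≤ (α * (Δp : ℝ) ^ ((r : ℝ) / p) * (Δn : ℝ) ^ ((s : ℝ) / q)) ^
      (1 / (1 - ((r : ℝ) / p + (s : ℝ) / q))) := by
  obtain ⟨e₀, -, hmax⟩ := exists_max_image univ w ⟨e, mem_univ e⟩
  have hmax' : ∀ f, w f ≤ w e₀ := fun f => hmax f (mem_univ f)
  refine (hmax' e).trans (le_rpow_one_div_one_sub_of_le_mul_rpow (hw e₀) (by positivity) hell ?_)
  calc w e₀ = α * G.normalMap p q w e₀ := hfix e₀
    _ ≤ α * (((Δp : ℝ) * w e₀) ^ ((r : ℝ) / p) * ((Δn : ℝ) * w e₀) ^ ((s : ℝ) / q)) :=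
        mul_le_mul_of_nonneg_left
          (normalMap_le_rpow hp hq (fun f => (hw f).le) hmax' hΔp hΔn e₀) hα
    _ = _ := mul_mul_rpow_mul_mul_rpow (Nat.cast_nonneg _) (Nat.cast_nonneg _) (hw e₀)

end DirectedHypergraph

theorem weight_bounds_of_elliptic_consistent_normal_general (m n N r s : ℕ)
    (G : DirectedHypergraph m n N r s) (p q α : ℝ) (hp : 1 ≤ p) (hq : 1 ≤ q)
    (hell : (r : ℝ) / p + (s : ℝ) / q < 1) (hα : 0 < α)
    (Bt : Fin m → Fin N → ℝ) (Bh : Fin n → Fin N → ℝ) (w : Fin N → ℝ)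
    (hw_pos : ∀ e, 0 < w e)
    (hBt_pos : ∀ u e, u ∈ G.tail e → 0 < Bt u e)
    (hBt_zero : ∀ u e, u ∉ G.tail e → Bt u e = 0)
    (hBh_pos : ∀ v e, v ∈ G.head e → 0 < Bh v e)
    (hBh_zero : ∀ v e, v ∉ G.head e → Bh v e = 0)
    (hrow_t : ∀ u, ∑ e, Bt u e = 1)
    (hrow_h : ∀ v, ∑ e, Bh v e = 1)
    (hnormal : ∀ e, w e ^ (1 - ((r : ℝ) / p + (s : ℝ) / q)) *
        ((∏ u ∈ G.tail e, Bt u e ^ (1 / p)) *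
          ∏ v ∈ G.head e, Bh v e ^ (1 / q)) = α)
    (hcons_t : ∀ u e f, u ∈ G.tail e → u ∈ G.tail f →
      w e * Bt u f = w f * Bt u e)
    (hcons_h : ∀ v e f, v ∈ G.head e → v ∈ G.head f →
      w e * Bh v f = w f * Bh v e)
    (δp δn Δp Δn : ℕ)
    (hδp : ∀ u, δp ≤ G.outDeg u) (hδn : ∀ v, δn ≤ G.inDeg v)
    (hΔp : ∀ u, G.outDeg u ≤ Δp) (hΔn : ∀ v, G.inDeg v ≤ Δn) :
    ∀ e, (α * (δp : ℝ) ^ ((r : ℝ) / p) * (δn : ℝ) ^ ((s : ℝ) / q)) ^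
        (1 / (1 - ((r : ℝ) / p + (s : ℝ) / q))) ≤ w e ∧
      w e ≤ (α * (Δp : ℝ) ^ ((r : ℝ) / p) * (Δn : ℝ) ^ ((s : ℝ) / q)) ^
        (1 / (1 - ((r : ℝ) / p + (s : ℝ) / q))) := by
  have hp₀ : 0 < p := one_pos.trans_le hp
  have hq₀ : 0 < q := one_pos.trans_le hq
  have hfix : ∀ e, w e = α * G.normalMap p q w e := fun e =>
    DirectedHypergraph.eq_mul_normalMap hw_pos
      (fun u hu => (hBt_pos u e hu).le) (fun v hv => (hBh_pos v e hv).le)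
      (fun u hu => eq_incidenceSum_mul_of_consistent (hBt_zero u) (hrow_t u) (hcons_t u e · hu))
      (fun v hv => eq_incidenceSum_mul_of_consistent (hBh_zero v) (hrow_h v) (hcons_h v e · hv))
      (hnormal e)
  intro e
  exact ⟨DirectedHypergraph.le_weight_of_eq_mul_normalMap hp₀ hq₀ hell hα.le hw_pos hfix hδp hδn e,
    DirectedHypergraph.weight_le_of_eq_mul_normalMap hp₀ hq₀ hell hα.le hw_pos hfix hΔp hΔn e⟩

/-- Bounds on the arc weights of an elliptic consistently `α`-normal labeling:
if `r/p + s/q < 1`, then for every arc `e`,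
`(α (δ⁺)^{r/p}(δ⁻)^{s/q})^{1/(1−(r/p+s/q))} ≤ w(e) ≤ (α (Δ⁺)^{r/p}(Δ⁻)^{s/q})^{1/(1−(r/p+s/q))}`. -/
theorem weight_bounds_of_elliptic_consistent_normal (m n N r s : ℕ)
    (G : DirectedHypergraph m n N r s) (p q α : ℝ) (hp : 1 ≤ p) (hq : 1 ≤ q)
    (hell : (r : ℝ) / p + (s : ℝ) / q < 1) (hα : 0 < α)
    (Bt : Fin m → Fin N → ℝ) (Bh : Fin n → Fin N → ℝ) (w : Fin N → ℝ)
    (hw_pos : ∀ e, 0 < w e) (hw_sum : ∑ e, w e = 1)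
    (hBt_pos : ∀ u e, u ∈ G.tail e → 0 < Bt u e)
    (hBt_zero : ∀ u e, u ∉ G.tail e → Bt u e = 0)
    (hBh_pos : ∀ v e, v ∈ G.head e → 0 < Bh v e)
    (hBh_zero : ∀ v e, v ∉ G.head e → Bh v e = 0)
    (hrow_t : ∀ u, ∑ e, Bt u e = 1)
    (hrow_h : ∀ v, ∑ e, Bh v e = 1)
    (hnormal : ∀ e, w e ^ (1 - ((r : ℝ) / p + (s : ℝ) / q)) *
        ((∏ u ∈ G.tail e, Bt u e ^ (1 / p)) *
          ∏ v ∈ G.head e, Bh v e ^ (1 / q)) = α)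
    (hcons_t : ∀ u e f, u ∈ G.tail e → u ∈ G.tail f →
      w e * Bt u f = w f * Bt u e)
    (hcons_h : ∀ v e f, v ∈ G.head e → v ∈ G.head f →
      w e * Bh v f = w f * Bh v e)
    (δp δn Δp Δn : ℕ)
    (hδp : ∀ u, δp ≤ G.outDeg u) (hδn : ∀ v, δn ≤ G.inDeg v)
    (hΔp : ∀ u, G.outDeg u ≤ Δp) (hΔn : ∀ v, G.inDeg v ≤ Δn) :
    ∀ e, (α * (δp : ℝ) ^ ((r : ℝ) / p) * (δn : ℝ) ^ ((s : ℝ) / q)) ^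
        (1 / (1 - ((r : ℝ) / p + (s : ℝ) / q))) ≤ w e ∧
      w e ≤ (α * (Δp : ℝ) ^ ((r : ℝ) / p) * (Δn : ℝ) ^ ((s : ℝ) / q)) ^
        (1 / (1 - ((r : ℝ) / p + (s : ℝ) / q))) :=
  weight_bounds_of_elliptic_consistent_normal_general m n N r s G p q α hp hq hell hα Bt Bh w hw_pos
    hBt_pos hBt_zero hBh_pos hBh_zero hrow_t hrow_h hnormal hcons_t hcons_h δp δn Δp Δn hδp hδn hΔp
    hΔn
end

section
/- For any (r,s)-directed hypergraph G and parameters in the elliptic phase r/p + s/q < 1, the function (p,q) ↦ (r|E(G)|)^{r/p} (s|E(G)|)^{s/q} λ_{p,q}(G) is non-increasing in p and non-increasing in q (on the region where r/p + s/q < 1). -/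
/-!
Every arc has exactly `r` tails, so the form `∑_e ∏_{T(e)} x ∏_{H(e)} y` is homogeneous of
degree `r` in `x`, and it only sees the coordinates of `x` on the at most `r|E|` vertices lying
in some tail. On these coordinates the power-mean inequality gives
`‖x‖_p ≤ (r|E|)^{1/p - 1/p'} ‖x‖_{p'}` for `p ≤ p'`, hence
`λ_{p',q} ≤ (r|E|)^{r/p - r/p'} λ_{p,q}`: this is the monotonicity in `p`. Reversing all arcs
exchanges the roles of `p` and `q`.
-/

namespace DirectedHypergraph

open Finset Real

section pnorm

variable {k : ℕ} {p : ℝ}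

lemma pnorm_nonneg (p : ℝ) (x : Fin k → ℝ) : 0 ≤ pnorm p x :=
  rpow_nonneg (sum_nonneg fun _ _ => rpow_nonneg (abs_nonneg _) _) _

lemma pnorm_abs (p : ℝ) (x : Fin k → ℝ) : pnorm p (fun i => |x i|) = pnorm p x := by
  simp [pnorm]

lemma abs_le_one_of_pnorm_eq_one (hp : 0 < p) {x : Fin k → ℝ} (hx : pnorm p x = 1) (i : Fin k) :
    |x i| ≤ 1 :=
  calc |x i| = (|x i| ^ p) ^ (1 / p) := by rw [one_div, rpow_rpow_inv (abs_nonneg _) hp.ne']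
    _ ≤ pnorm p x := rpow_le_rpow (rpow_nonneg (abs_nonneg _) _)
        (single_le_sum (fun j _ => rpow_nonneg (abs_nonneg (x j)) p) (mem_univ i))
        (by positivity)
    _ = 1 := hx

lemma pnorm_smul (hp : 0 < p) (a : ℝ) (x : Fin k → ℝ) : pnorm p (a • x) = |a| * pnorm p x := by
  have hsum : ∑ i, |(a • x) i| ^ p = |a| ^ p * ∑ i, |x i| ^ p := by
    rw [mul_sum]
    exact sum_congr rfl fun i _ => by
      rw [Pi.smul_apply, smul_eq_mul, abs_mul, mul_rpow (abs_nonneg _) (abs_nonneg _)]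
  rw [pnorm, pnorm, hsum, mul_rpow (by positivity) (sum_nonneg fun i _ => by positivity),
    one_div, rpow_rpow_inv (abs_nonneg _) hp.ne']

lemma eq_zero_of_pnorm_eq_zero (hp : 0 < p) {x : Fin k → ℝ} (hx : pnorm p x = 0) : x = 0 := by
  have hterm : ∀ i ∈ univ, |x i| ^ p = 0 := by
    refine (sum_eq_zero_iff_of_nonneg fun i _ => by positivity).1 ?_
    exact (rpow_eq_zero (sum_nonneg fun i _ => by positivity) (by positivity)).1 hx
  funext i
  simpa [rpow_eq_zero (abs_nonneg _) hp.ne'] using hterm i (mem_univ i)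

lemma pos_of_pnorm_eq_one (hp : p ≠ 0) {x : Fin k → ℝ} (hx : pnorm p x = 1) : 0 < k := by
  rcases Nat.eq_zero_or_pos k with rfl | hk
  · simp [pnorm, zero_rpow (inv_ne_zero hp)] at hx
  · exact hk

lemma exists_pnorm_eq_one (hk : 0 < k) (hp : 0 < p) : ∃ x : Fin k → ℝ, pnorm p x = 1 := by
  refine ⟨Pi.single ⟨0, hk⟩ 1, ?_⟩
  rw [pnorm, sum_eq_single ⟨0, hk⟩ (fun j _ hj => by simp [hj, zero_rpow hp.ne']) (by simp)]
  simp

lemma pnorm_indicator_le (T : Finset (Fin k)) {p' : ℝ} (hp : 0 < p) (hpp' : p ≤ p')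
    (x : Fin k → ℝ) :
    pnorm p ((T : Set (Fin k)).indicator x) ≤ (T.card : ℝ) ^ (1 / p - 1 / p') * pnorm p' x := by
  have hp' : 0 < p' := hp.trans_le hpp'
  have hsum : ∑ i, |(T : Set (Fin k)).indicator x i| ^ p = ∑ i ∈ T, |x i| ^ p := by
    rw [← sum_indicator_subset _ (subset_univ T)]
    exact sum_congr rfl fun i _ => by
      by_cases hi : i ∈ T <;> simp [hi, zero_rpow hp.ne']
  have hmean : (∑ i ∈ T, |x i| ^ p) ^ (p' / p) ≤ (T.card : ℝ) ^ (p' / p - 1) * ∑ i, |x i| ^ p' := by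
    refine (rpow_sum_le_const_mul_sum_rpow_of_nonneg T ((one_le_div hp).2 hpp')
      fun i _ => by positivity).trans ?_
    gcongr
    calc ∑ i ∈ T, (|x i| ^ p) ^ (p' / p) = ∑ i ∈ T, |x i| ^ p' :=
          sum_congr rfl fun i _ => by rw [← rpow_mul (abs_nonneg _), mul_div_cancel₀ _ hp.ne']
      _ ≤ ∑ i, |x i| ^ p' :=
          sum_le_sum_of_subset_of_nonneg (subset_univ T) fun i _ _ => by positivity
  have hroot := rpow_le_rpow (by positivity) hmean (by positivity : 0 ≤ 1 / p')
  rw [← rpow_mul (sum_nonneg fun i _ => by positivity),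
    mul_rpow (by positivity) (sum_nonneg fun i _ => by positivity),
    ← rpow_mul (Nat.cast_nonneg _)] at hroot
  rw [pnorm, pnorm, hsum]
  convert hroot using 3 <;> field_simp

end pnorm

variable {m n N r s : ℕ} (G : DirectedHypergraph m n N r s) {p q : ℝ}

lemma polyForm_le_card (hp : 0 < p) (hq : 0 < q) {x : Fin m → ℝ} {y : Fin n → ℝ}
    (hx : pnorm p x = 1) (hy : pnorm q y = 1) : G.polyForm x y ≤ N := by
  calc G.polyForm x y ≤ ∑ _e : Fin N, (1 : ℝ) := by
        refine sum_le_sum fun e _ => (le_abs_self _).trans ?_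
        rw [abs_mul, abs_prod, abs_prod]
        exact mul_le_one₀ (prod_le_one (fun _ _ => abs_nonneg _)
            fun u _ => abs_le_one_of_pnorm_eq_one hp hx u)
          (prod_nonneg fun _ _ => abs_nonneg _)
          (prod_le_one (fun _ _ => abs_nonneg _) fun v _ => abs_le_one_of_pnorm_eq_one hq hy v)
    _ = N := by simp

lemma polyForm_le_specRad (hp : 0 < p) (hq : 0 < q) {x : Fin m → ℝ} {y : Fin n → ℝ}
    (hx : pnorm p x = 1) (hy : pnorm q y = 1) : G.polyForm x y ≤ G.specRad p q :=
  le_csSup ⟨N, by rintro _ ⟨x, y, hx, hy, rfl⟩; exact G.polyForm_le_card hp hq hx hy⟩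
    ⟨x, y, hx, hy, rfl⟩

lemma polyForm_nonneg {x : Fin m → ℝ} {y : Fin n → ℝ} (hx : 0 ≤ x) (hy : 0 ≤ y) :
    0 ≤ G.polyForm x y :=
  sum_nonneg fun _ _ => mul_nonneg (prod_nonneg fun u _ => hx u) (prod_nonneg fun v _ => hy v)

lemma specRad_nonneg (p q : ℝ) : 0 ≤ G.specRad p q := by
  obtain h | ⟨_, x, y, hx, hy, rfl⟩ :=
    {z | ∃ x y, pnorm p x = 1 ∧ pnorm q y = 1 ∧ z = G.polyForm x y}.eq_empty_or_nonempty
  · rw [specRad, h, sSup_empty]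
  · exact sSup_nonneg' ⟨_, ⟨_, _, (pnorm_abs p x).trans hx, (pnorm_abs q y).trans hy, rfl⟩,
      G.polyForm_nonneg (fun u => abs_nonneg (x u)) fun v => abs_nonneg (y v)⟩

lemma polyForm_smul_left (a : ℝ) (x : Fin m → ℝ) (y : Fin n → ℝ) :
    G.polyForm (a • x) y = a ^ r * G.polyForm x y := by
  simp only [polyForm, mul_sum, Pi.smul_apply, smul_eq_mul, prod_mul_distrib, prod_const,
    G.tail_card, mul_assoc]

lemma polyForm_le_pnorm_pow_mul_specRad (hp : 0 < p) (hq : 0 < q) (hm : 0 < m)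
    (x : Fin m → ℝ) {y : Fin n → ℝ} (hy : pnorm q y = 1) :
    G.polyForm x y ≤ pnorm p x ^ r * G.specRad p q := by
  rcases (pnorm_nonneg p x).eq_or_lt with hx0 | hx0
  · -- writing `x = 0 • x₁` also covers `r = 0`, where `0 ^ r = 1` and the form ignores `x`
    obtain ⟨x₁, hx₁⟩ := exists_pnorm_eq_one hm hp
    rw [← hx0, eq_zero_of_pnorm_eq_zero hp hx0.symm, ← zero_smul ℝ x₁, polyForm_smul_left]
    exact mul_le_mul_of_nonneg_left (G.polyForm_le_specRad hp hq hx₁ hy) (by positivity)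
  · have hunit : pnorm p ((pnorm p x)⁻¹ • x) = 1 := by
      rw [pnorm_smul hp, abs_inv, abs_of_pos hx0, inv_mul_cancel₀ hx0.ne']
    calc G.polyForm x y = pnorm p x ^ r * G.polyForm ((pnorm p x)⁻¹ • x) y := by
          rw [polyForm_smul_left, ← mul_assoc, ← mul_pow, mul_inv_cancel₀ hx0.ne', one_pow,
            one_mul]
      _ ≤ pnorm p x ^ r * G.specRad p q :=
          mul_le_mul_of_nonneg_left (G.polyForm_le_specRad hp hq hunit hy) (by positivity)

def tailSupport : Finset (Fin m) := univ.biUnion G.tail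

lemma card_tailSupport_le : (G.tailSupport.card : ℝ) ≤ r * N := by
  have := card_biUnion_le_card_mul univ G.tail r fun e _ => (G.tail_card e).le
  rw [card_univ, Fintype.card_fin, mul_comm] at this
  exact_mod_cast this

lemma polyForm_indicator_tailSupport (x : Fin m → ℝ) (y : Fin n → ℝ) :
    G.polyForm ((G.tailSupport : Set (Fin m)).indicator x) y = G.polyForm x y :=
  sum_congr rfl fun e _ => by
    congr 1
    exact prod_congr rfl fun u hu =>
      Set.indicator_of_mem (mem_coe.2 (mem_biUnion.2 ⟨e, mem_univ e, hu⟩)) x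

lemma specRad_le_rpow_mul_specRad_of_le {p' : ℝ} (hp : 0 < p) (hpp' : p ≤ p') (hq : 0 < q) :
    G.specRad p' q ≤ ((r : ℝ) * N) ^ ((r : ℝ) / p - r / p') * G.specRad p q := by
  have hp' : 0 < p' := hp.trans_le hpp'
  refine Real.sSup_le ?_ (mul_nonneg (by positivity) (G.specRad_nonneg p q))
  rintro _ ⟨x, y, hx, hy, rfl⟩
  have hexp : 0 ≤ 1 / p - 1 / p' := sub_nonneg.2 (one_div_le_one_div_of_le hp hpp')
  have hnorm : pnorm p ((G.tailSupport : Set (Fin m)).indicator x) ≤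
      ((r : ℝ) * N) ^ (1 / p - 1 / p') :=
    calc _ ≤ (G.tailSupport.card : ℝ) ^ (1 / p - 1 / p') * pnorm p' x :=
          pnorm_indicator_le _ hp hpp' x
      _ ≤ ((r : ℝ) * N) ^ (1 / p - 1 / p') := by
          rw [hx, mul_one]
          exact rpow_le_rpow (Nat.cast_nonneg _) G.card_tailSupport_le hexp
  calc G.polyForm x y
      = G.polyForm ((G.tailSupport : Set (Fin m)).indicator x) y :=
        (G.polyForm_indicator_tailSupport x y).symm
    _ ≤ pnorm p ((G.tailSupport : Set (Fin m)).indicator x) ^ r * G.specRad p q :=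
        G.polyForm_le_pnorm_pow_mul_specRad hp hq (pos_of_pnorm_eq_one hp'.ne' hx) _ hy
    _ ≤ (((r : ℝ) * N) ^ (1 / p - 1 / p')) ^ r * G.specRad p q := by
        gcongr
        · exact G.specRad_nonneg p q
        · exact pnorm_nonneg _ _
    _ = ((r : ℝ) * N) ^ ((r : ℝ) / p - r / p') * G.specRad p q := by
        rw [← rpow_mul_natCast (by positivity)]
        congr 2
        ring

lemma rpow_mul_specRad_le_of_le {p' : ℝ} (hp : 0 < p) (hpp' : p ≤ p') (hq : 0 < q) :
    ((r : ℝ) * N) ^ ((r : ℝ) / p') * G.specRad p' q ≤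
      ((r : ℝ) * N) ^ ((r : ℝ) / p) * G.specRad p q := by
  have hp' : 0 < p' := hp.trans_le hpp'
  have hsplit : ((r : ℝ) * N) ^ ((r : ℝ) / p) =
      ((r : ℝ) * N) ^ ((r : ℝ) / p') * ((r : ℝ) * N) ^ ((r : ℝ) / p - r / p') := by
    rw [← rpow_add_of_nonneg (by positivity) (by positivity)
      (sub_nonneg.2 (div_le_div_of_nonneg_left (Nat.cast_nonneg r) hp hpp')), add_sub_cancel]
  rw [hsplit, mul_assoc]
  exact mul_le_mul_of_nonneg_left (G.specRad_le_rpow_mul_specRad_of_le hp hpp' hq) (by positivity)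

def reverse : DirectedHypergraph n m N s r :=
  ⟨G.head, G.tail, G.head_card, G.tail_card⟩

lemma specRad_reverse (p q : ℝ) : G.reverse.specRad q p = G.specRad p q := by
  have hform : ∀ x y, G.reverse.polyForm y x = G.polyForm x y :=
    fun _ _ => sum_congr rfl fun _ _ => mul_comm _ _
  simp only [specRad, hform]
  congr 1
  ext z
  exact ⟨fun ⟨y, x, hy, hx, hz⟩ => ⟨x, y, hx, hy, hz⟩, fun ⟨x, y, hx, hy, hz⟩ => ⟨y, x, hy, hx, hz⟩⟩

end DirectedHypergraph

theorem specRad_scaled_antitone_general (m n N r s : ℕ)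
    (G : DirectedHypergraph m n N r s) (p q p' q' : ℝ)
    (hp : 1 ≤ p) (hq : 1 ≤ q) (hpp' : p ≤ p') (hqq' : q ≤ q') :
    ((r : ℝ) * (N : ℝ)) ^ ((r : ℝ) / p') * ((s : ℝ) * (N : ℝ)) ^ ((s : ℝ) / q') *
        G.specRad p' q' ≤
      ((r : ℝ) * (N : ℝ)) ^ ((r : ℝ) / p) * ((s : ℝ) * (N : ℝ)) ^ ((s : ℝ) / q) *
        G.specRad p q := by
  have hp0 : 0 < p := zero_lt_one.trans_le hp
  have hq0 : 0 < q := zero_lt_one.trans_le hq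
  have hstep_p := G.rpow_mul_specRad_le_of_le hp0 hpp' (hq0.trans_le hqq')
  have hstep_q := G.reverse.rpow_mul_specRad_le_of_le hq0 hqq' hp0
  rw [DirectedHypergraph.specRad_reverse, DirectedHypergraph.specRad_reverse] at hstep_q
  calc ((r : ℝ) * N) ^ ((r : ℝ) / p') * ((s : ℝ) * N) ^ ((s : ℝ) / q') * G.specRad p' q'
      = ((s : ℝ) * N) ^ ((s : ℝ) / q') * (((r : ℝ) * N) ^ ((r : ℝ) / p') * G.specRad p' q') := by
        ring
    _ ≤ ((s : ℝ) * N) ^ ((s : ℝ) / q') * (((r : ℝ) * N) ^ ((r : ℝ) / p) * G.specRad p q') := by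
        gcongr
    _ = ((r : ℝ) * N) ^ ((r : ℝ) / p) * (((s : ℝ) * N) ^ ((s : ℝ) / q') * G.specRad p q') := by
        ring
    _ ≤ ((r : ℝ) * N) ^ ((r : ℝ) / p) * (((s : ℝ) * N) ^ ((s : ℝ) / q) * G.specRad p q) := by
        gcongr
    _ = _ := by ring

/-- In the elliptic phase `r/p + s/q < 1`, the function
`(p,q) ↦ (r|E(G)|)^{r/p} (s|E(G)|)^{s/q} λ_{p,q}(G)` is non-increasing in `p`
and in `q`. -/
theorem specRad_scaled_antitone (m n N r s : ℕ)
    (G : DirectedHypergraph m n N r s) (p q p' q' : ℝ)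
    (hp : 1 ≤ p) (hq : 1 ≤ q) (hpp' : p ≤ p') (hqq' : q ≤ q')
    (he : (r : ℝ) / p + (s : ℝ) / q < 1) :
    ((r : ℝ) * (N : ℝ)) ^ ((r : ℝ) / p') * ((s : ℝ) * (N : ℝ)) ^ ((s : ℝ) / q') *
        G.specRad p' q' ≤
      ((r : ℝ) * (N : ℝ)) ^ ((r : ℝ) / p) * ((s : ℝ) * (N : ℝ)) ^ ((s : ℝ) / q) *
        G.specRad p q :=
  specRad_scaled_antitone_general m n N r s G p q p' q' hp hq hpp' hqq'
end
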